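/- arXiv:2406.17514 — 2 statements merged into one kernel-verified Lean document; each statement's English description precedes it below -/
import Mathlib

section
/- Let β be an odd integer and n a natural number with n ≥ (β²−1)/4. Then Υ induces a bijection from the set of shift-equivalence classes of symbols of rank n and defect β onto the set 𝒫₂(n − ((β+1)/2)·((β−1)/2)) of bi-partitions of n − (β+1)(β−1)/4. -/
/-- A Lusztig symbol: a pair of finite sets of natural numbers (equivalently, a pair of
strictly decreasing finite sequences of natural numbers). -/
structure LSymbol where
  A : Finset ℕ
  B : Finset ℕ

namespace LSymbol

/-- The rank of a symbol: `Σ aᵢ + Σ bⱼ − ⌊((m₁+m₂−1)/2)²⌋`. -/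
def rank (Λ : LSymbol) : ℤ :=
  ((Λ.A.sum id + Λ.B.sum id : ℕ) : ℤ) - ((Λ.A.card + Λ.B.card : ℤ) - 1) ^ 2 / 4

/-- The defect of a symbol: `m₁ − m₂`. -/
def defect (Λ : LSymbol) : ℤ :=
  (Λ.A.card : ℤ) - (Λ.B.card : ℤ)

/-- The shift of a symbol: add 1 to every entry of each row and append a new entry 0. -/
def shift (Λ : LSymbol) : LSymbol :=
  ⟨insert 0 (Λ.A.image (· + 1)), insert 0 (Λ.B.image (· + 1))⟩

/-- Shift-equivalence: the equivalence relation generated by `Λ ∼ shift Λ`. -/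
def ShiftEquiv : LSymbol → LSymbol → Prop :=
  Relation.EqvGen fun Λ Λ' => Λ' = Λ.shift

/-- The partition (as a multiset of nonzero parts) attached to one row of a symbol:
for the row `a₁ > a₂ > … > a_m`, the parts are `aᵢ − (m − i)`, discarding zeros. -/
def rowParts (s : Finset ℕ) : Multiset ℕ :=
  ((((s.sort (· ≤ ·)).zipIdx.map fun p => p.1 - p.2) : Multiset ℕ)).filter (· ≠ 0)

/-- The bi-partition `Υ(Λ)` attached to a symbol. -/
def upsilon (Λ : LSymbol) : Multiset ℕ × Multiset ℕ :=
  (rowParts Λ.A, rowParts Λ.B)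

end LSymbol

/-- `μ` is a bi-partition of `N`: an ordered pair of partitions (multisets of positive
natural numbers) whose total size is `N`. -/
def IsBipartitionOf (μ : Multiset ℕ × Multiset ℕ) (N : ℤ) : Prop :=
  (∀ x ∈ μ.1, 0 < x) ∧ (∀ x ∈ μ.2, 0 < x) ∧ ((μ.1.sum + μ.2.sum : ℕ) : ℤ) = N

/-! Listing a row of a symbol increasingly, `aᵢ ↦ aᵢ - i` is a bijection from strictly increasing
sequences onto weakly increasing ones (inverse `aᵢ ↦ aᵢ + i`). Hence a row is determined by its
nonzero parts together with its length, and a multiset of positive parts arises from a row of any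
length at least its size. A shift prepends a zero to both weakly increasing sequences, so `Υ` is
shift invariant, and two symbols with the same `Υ` and defect differ by a power of the shift.
The rank is `|λ| + |μ| + C(m₁, 2) + C(m₂, 2) - ⌊(m₁ + m₂ - 1)² / 4⌋`, and when `m₁ - m₂ = 2k + 1`
the square is exactly `4 (C(m₁, 2) + C(m₂, 2) - k (k + 1))`. -/

namespace List

def addIdx (l : List ℕ) : List ℕ := l.zipIdx.map fun p => p.1 + p.2

def subIdx (l : List ℕ) : List ℕ := l.zipIdx.map fun p => p.1 - p.2

@[simp] lemma length_addIdx (l : List ℕ) : l.addIdx.length = l.length := by simp [addIdx]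

@[simp] lemma length_subIdx (l : List ℕ) : l.subIdx.length = l.length := by simp [subIdx]

@[simp] lemma getElem_addIdx (l : List ℕ) (i : ℕ) (h : i < l.addIdx.length) :
    l.addIdx[i] = l[i]'(by simpa using h) + i := by
  simp [addIdx, getElem_zipIdx]

@[simp] lemma getElem_subIdx (l : List ℕ) (i : ℕ) (h : i < l.subIdx.length) :
    l.subIdx[i] = l[i]'(by simpa using h) - i := by
  simp [subIdx, getElem_zipIdx]

lemma getElem_add_sub_le_getElem {l : List ℕ} (hl : l.Pairwise (· < ·)) {i j : ℕ} (hij : i ≤ j)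
    (hj : j < l.length) : l[i] + (j - i) ≤ l[j] := by
  induction j, hij using Nat.le_induction with
  | base => simp
  | succ j hij ih =>
    have hlt : l[j] < l[j + 1] := pairwise_iff_getElem.mp hl j (j + 1) (by omega) hj (by omega)
    have := ih (by omega)
    omega

lemma le_getElem_of_pairwise_lt {l : List ℕ} (hl : l.Pairwise (· < ·)) (i : ℕ)
    (hi : i < l.length) : i ≤ l[i] := by
  have := getElem_add_sub_le_getElem hl (Nat.zero_le i) hi
  omega

lemma Pairwise.addIdx {l : List ℕ} (hl : l.Pairwise (· ≤ ·)) : l.addIdx.Pairwise (· < ·) := by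
  rw [pairwise_iff_getElem] at hl ⊢
  intro i j hi hj hij
  simp only [getElem_addIdx]
  have := hl i j (by simpa using hi) (by simpa using hj) hij
  omega

lemma Pairwise.subIdx {l : List ℕ} (hl : l.Pairwise (· < ·)) : l.subIdx.Pairwise (· ≤ ·) := by
  rw [pairwise_iff_getElem]
  intro i j hi hj hij
  simp only [getElem_subIdx]
  have := getElem_add_sub_le_getElem hl hij.le (by simpa using hj)
  omega

lemma subIdx_addIdx (l : List ℕ) : l.addIdx.subIdx = l :=
  ext_getElem (by simp) fun i _ _ => by simp

lemma addIdx_subIdx {l : List ℕ} (hl : l.Pairwise (· < ·)) : l.subIdx.addIdx = l :=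
  ext_getElem (by simp) fun i _ hi => by
    have := le_getElem_of_pairwise_lt hl i hi
    simp only [getElem_addIdx, getElem_subIdx]
    omega

lemma sum_addIdx (l : List ℕ) : l.addIdx.sum = l.sum + l.length.choose 2 := by
  rw [addIdx, sum_map_add, zipIdx_map_fst, zipIdx_map_snd, sum_range', Nat.choose_two_right]
  simp

lemma subIdx_zero_cons_map_succ (l : List ℕ) : (0 :: l.map (· + 1)).subIdx = 0 :: l.subIdx :=
  ext_getElem (by simp) fun i _ _ => by
    cases i <;> simp

end List

namespace LSymbol

open Multiset

def padZeros (P : Multiset ℕ) (m : ℕ) : Multiset ℕ := P + replicate (m - card P) 0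

lemma card_padZeros {P : Multiset ℕ} {m : ℕ} (h : card P ≤ m) : card (padZeros P m) = m := by
  simp only [padZeros, card_add, card_replicate]
  omega

lemma filter_ne_zero_padZeros {P : Multiset ℕ} (hP : ∀ x ∈ P, 0 < x) (m : ℕ) :
    (padZeros P m).filter (· ≠ 0) = P := by
  rw [padZeros, filter_add, filter_eq_self.mpr fun x hx => (hP x hx).ne',
    filter_eq_nil.mpr fun x hx => by simp [eq_of_mem_replicate hx], add_zero]

lemma coe_subIdx_sort (s : Finset ℕ) :
    (s.sort.subIdx : Multiset ℕ) = padZeros (rowParts s) s.card := by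
  set M : Multiset ℕ := (s.sort.subIdx : Multiset ℕ)
  have hzeros : M.filter (fun a => ¬a ≠ 0) = replicate (M.count 0) 0 := by
    simpa only [not_not] using filter_eq' M 0
  have hsplit : rowParts s + replicate (M.count 0) 0 = M := hzeros ▸ filter_add_not _ M
  have hcard : card M = s.card := by simp [M]
  have := congrArg card hsplit
  rw [card_add, card_replicate] at this
  rw [padZeros, show s.card - card (rowParts s) = M.count 0 by omega, hsplit]

lemma pos_of_mem_rowParts {s : Finset ℕ} {x : ℕ} (hx : x ∈ rowParts s) : 0 < x :=
  Nat.pos_of_ne_zero (of_mem_filter (p := (· ≠ 0)) hx)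

lemma sum_id_eq_sum_rowParts_add_choose (s : Finset ℕ) :
    s.sum id = (rowParts s).sum + s.card.choose 2 := by
  have hsub : s.sort.subIdx.sum = (rowParts s).sum := by
    rw [← sum_coe, coe_subIdx_sort, padZeros, sum_add, sum_replicate, smul_zero, add_zero]
  rw [Finset.sum, map_id, ← Finset.sort_eq s (· ≤ ·), sum_coe,
    ← List.addIdx_subIdx (Finset.sortedLT_sort s).pairwise, List.sum_addIdx, hsub,
    List.length_subIdx, Finset.length_sort]

def row (P : Multiset ℕ) (m : ℕ) : Finset ℕ := (padZeros P m).sort.addIdx.toFinset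

lemma sort_row (P : Multiset ℕ) (m : ℕ) : (row P m).sort = (padZeros P m).sort.addIdx := by
  have hlt := (pairwise_sort (padZeros P m) (· ≤ ·)).addIdx
  exact (List.toFinset_sort _ (hlt.imp ne_of_lt)).2 (hlt.imp le_of_lt)

lemma card_row {P : Multiset ℕ} {m : ℕ} (h : card P ≤ m) : (row P m).card = m := by
  rw [← Finset.length_sort (· ≤ ·), sort_row, List.length_addIdx, ← coe_card, sort_eq,
    card_padZeros h]

lemma rowParts_row {P : Multiset ℕ} (hP : ∀ x ∈ P, 0 < x) (m : ℕ) : rowParts (row P m) = P := by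
  rw [rowParts, ← List.subIdx, sort_row, List.subIdx_addIdx, sort_eq,
    filter_ne_zero_padZeros hP]

lemma row_rowParts (s : Finset ℕ) : row (rowParts s) s.card = s := by
  have hsorted : s.sort.Pairwise (· < ·) := (Finset.sortedLT_sort s).pairwise
  have hsort : (padZeros (rowParts s) s.card).sort = s.sort.subIdx :=
    List.Perm.eq_of_pairwise' (pairwise_sort _ _) hsorted.subIdx
      (coe_eq_coe.mp (by rw [sort_eq, coe_subIdx_sort]))
  rw [row, hsort, List.addIdx_subIdx hsorted, Finset.sort_toFinset]

lemma sort_insert_zero_image_succ (s : Finset ℕ) :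
    (insert 0 (s.image (· + 1))).sort = 0 :: s.sort.map (· + 1) := by
  have himage : s.image (· + 1) = s.map ⟨(· + 1), add_left_injective 1⟩ := by
    rw [Finset.map_eq_image]; rfl
  rw [Finset.sort_insert _ (fun _ _ => Nat.zero_le _) (by simp), himage,
    ← Finset.map_sort _ _ _ _ fun _ _ _ _ => Nat.add_le_add_iff_right.symm]
  rfl

lemma rowParts_insert_zero_image_succ (s : Finset ℕ) :
    rowParts (insert 0 (s.image (· + 1))) = rowParts s := by
  rw [rowParts, ← List.subIdx, sort_insert_zero_image_succ, List.subIdx_zero_cons_map_succ,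
    ← cons_coe]
  exact filter_cons_of_neg _ (not_not.mpr rfl)

lemma card_insert_zero_image_succ (s : Finset ℕ) :
    (insert 0 (s.image (· + 1))).card = s.card + 1 := by
  rw [Finset.card_insert_of_notMem (by simp),
    Finset.card_image_of_injective _ (add_left_injective 1)]

lemma upsilon_shift (Λ : LSymbol) : Λ.shift.upsilon = Λ.upsilon := by
  simp only [upsilon, shift, rowParts_insert_zero_image_succ]

lemma eq_of_upsilon_eq {Λ Λ' : LSymbol} (h : Λ.upsilon = Λ'.upsilon)
    (hA : Λ.A.card = Λ'.A.card) (hB : Λ.B.card = Λ'.B.card) : Λ = Λ' := by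
  obtain ⟨A, B⟩ := Λ
  obtain ⟨A', B'⟩ := Λ'
  simp only [upsilon, Prod.mk.injEq] at h
  rw [mk.injEq, ← row_rowParts A, ← row_rowParts A', ← row_rowParts B, ← row_rowParts B',
    h.1, h.2, hA, hB]
  exact ⟨rfl, rfl⟩

lemma shiftEquiv_of_upsilon_eq_of_card_add {Λ Λ' : LSymbol} (h : Λ.upsilon = Λ'.upsilon)
    {k : ℕ} (hA : Λ'.A.card = Λ.A.card + k) (hB : Λ'.B.card = Λ.B.card + k) :
    ShiftEquiv Λ Λ' := by
  induction k generalizing Λ with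
  | zero => exact eq_of_upsilon_eq h hA.symm hB.symm ▸ .refl Λ
  | succ k ih =>
    refine .trans _ Λ.shift _ (.rel _ _ rfl) (ih ((upsilon_shift Λ).trans h) ?_ ?_)
    · rw [shift, card_insert_zero_image_succ, hA]; omega
    · rw [shift, card_insert_zero_image_succ, hB]; omega

lemma upsilon_eq_of_shiftEquiv {Λ Λ' : LSymbol} (h : ShiftEquiv Λ Λ') :
    Λ.upsilon = Λ'.upsilon := by
  induction h with
  | rel _ _ h => rw [h, upsilon_shift]
  | refl => rfl
  | symm _ _ _ ih => exact ih.symm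
  | trans _ _ _ _ _ ih₁ ih₂ => exact ih₁.trans ih₂

lemma shiftEquiv_iff_upsilon_eq {Λ Λ' : LSymbol} (hd : Λ.defect = Λ'.defect) :
    ShiftEquiv Λ Λ' ↔ Λ.upsilon = Λ'.upsilon := by
  refine ⟨upsilon_eq_of_shiftEquiv, fun h => ?_⟩
  wlog hle : Λ.A.card ≤ Λ'.A.card generalizing Λ Λ'
  · exact .symm _ _ (this hd.symm h.symm (by omega))
  unfold defect at hd
  exact shiftEquiv_of_upsilon_eq_of_card_add h (k := Λ'.A.card - Λ.A.card) (by omega) (by omega)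

lemma rank_eq_of_odd_defect {Λ : LSymbol} (hd : Odd Λ.defect) :
    Λ.rank = ((Λ.upsilon.1.sum + Λ.upsilon.2.sum : ℕ) : ℤ)
      + (Λ.defect + 1) / 2 * ((Λ.defect - 1) / 2) := by
  obtain ⟨k, hk⟩ := hd
  have choose_two_mul_two (m : ℕ) : (m.choose 2 : ℤ) * 2 = m * (m - 1) := by
    have := Nat.cast_choose_two ℚ m
    field_simp at this
    exact_mod_cast this
  have hsq : ((Λ.A.card + Λ.B.card : ℤ) - 1) ^ 2
      = 4 * ((Λ.A.card.choose 2 : ℤ) + Λ.B.card.choose 2 - k * (k + 1)) := by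
    unfold defect at hk
    linear_combination (-2) * choose_two_mul_two Λ.A.card - 2 * choose_two_mul_two Λ.B.card
      - ((Λ.A.card : ℤ) - Λ.B.card + 2 * k + 1) * hk
  rw [rank, hsq, Int.mul_ediv_cancel_left _ (by norm_num), sum_id_eq_sum_rowParts_add_choose,
    sum_id_eq_sum_rowParts_add_choose, hk, show (2 * k + 1 + 1) / 2 = k + 1 by omega,
    show (2 * k + 1 - 1) / 2 = k by omega, upsilon]
  push_cast
  ring

lemma exists_defect_eq_upsilon_eq (μ : Multiset ℕ × Multiset ℕ) (h₁ : ∀ x ∈ μ.1, 0 < x)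
    (h₂ : ∀ x ∈ μ.2, 0 < x) (β : ℤ) : ∃ Λ : LSymbol, Λ.defect = β ∧ Λ.upsilon = μ := by
  set c := Multiset.card μ.1 + Multiset.card μ.2
  refine ⟨⟨row μ.1 (c + β.toNat), row μ.2 (c + (-β).toNat)⟩, ?_, ?_⟩
  · rw [defect, card_row (by omega), card_row (by omega)]
    omega
  · rw [upsilon, rowParts_row h₁, rowParts_row h₂]

end LSymbol

theorem statement2_general (β : ℤ) (hβ : Odd β) (n : ℕ) :
    (∀ Λ : LSymbol, Λ.rank = n → Λ.defect = β →
      IsBipartitionOf Λ.upsilon ((n : ℤ) - ((β + 1) / 2) * ((β - 1) / 2))) ∧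
    (∀ Λ Λ' : LSymbol, Λ.rank = n → Λ.defect = β → Λ'.rank = n → Λ'.defect = β →
      (Λ.upsilon = Λ'.upsilon ↔ LSymbol.ShiftEquiv Λ Λ')) ∧
    (∀ μ : Multiset ℕ × Multiset ℕ,
      IsBipartitionOf μ ((n : ℤ) - ((β + 1) / 2) * ((β - 1) / 2)) →
      ∃ Λ : LSymbol, Λ.rank = n ∧ Λ.defect = β ∧ Λ.upsilon = μ) := by
  refine ⟨fun Λ hr hd => ?_, fun Λ Λ' _ hd _ hd' => ?_, fun μ ⟨h₁, h₂, hsum⟩ => ?_⟩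
  · have hrank := LSymbol.rank_eq_of_odd_defect (hd ▸ hβ)
    exact ⟨fun _ => LSymbol.pos_of_mem_rowParts, fun _ => LSymbol.pos_of_mem_rowParts,
      by rw [hr, hd] at hrank; omega⟩
  · exact (LSymbol.shiftEquiv_iff_upsilon_eq (hd.trans hd'.symm)).symm
  · obtain ⟨Λ, hd, hΛ⟩ := LSymbol.exists_defect_eq_upsilon_eq μ h₁ h₂ β
    have hrank := LSymbol.rank_eq_of_odd_defect (hd ▸ hβ)
    rw [hd, hΛ] at hrank
    exact ⟨Λ, by omega, hd, hΛ⟩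

/-- For odd `β` and `n ≥ (β²−1)/4`, the map `Υ` induces a bijection from the set of
shift-equivalence classes of symbols of rank `n` and defect `β` onto the set
`𝒫₂(n − ((β+1)/2)·((β−1)/2))` of bi-partitions: `Υ` lands in that set, two symbols of
rank `n` and defect `β` have the same image iff they are shift-equivalent, and every
such bi-partition is attained. -/
theorem statement2 (β : ℤ) (hβ : Odd β) (n : ℕ) (hn : (β ^ 2 - 1) / 4 ≤ (n : ℤ)) :
    (∀ Λ : LSymbol, Λ.rank = n → Λ.defect = β →
      IsBipartitionOf Λ.upsilon ((n : ℤ) - ((β + 1) / 2) * ((β - 1) / 2))) ∧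
    (∀ Λ Λ' : LSymbol, Λ.rank = n → Λ.defect = β → Λ'.rank = n → Λ'.defect = β →
      (Λ.upsilon = Λ'.upsilon ↔ LSymbol.ShiftEquiv Λ Λ')) ∧
    (∀ μ : Multiset ℕ × Multiset ℕ,
      IsBipartitionOf μ ((n : ℤ) - ((β + 1) / 2) * ((β - 1) / 2)) →
      ∃ Λ : LSymbol, Λ.rank = n ∧ Λ.defect = β ∧ Λ.upsilon = μ) :=
  statement2_general β hβ n
end

section
/- Let λ = [λ₁ ≥ λ₂ ≥ … ≥ λ_k] be a partition of n with largest part λ₁ and let λ_⋆ = [λ₂, …, λ_k]. Then (λ_⋆)ᵗ is the unique partition μ of n − λ₁ such that λᵗ and μ are 2-transverse. -/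
/-- We represent a partition by the (antitone, eventually zero) function `f : ℕ → ℕ`
sending `i` to its `(i+1)`-st part `λ_{i+1}`. The transpose (conjugate) partition:
its `(i+1)`-st part is the number of parts of `f` that are `> i` (i.e. `≥ i+1`). -/
noncomputable def transposeFun (f : ℕ → ℕ) : ℕ → ℕ := fun i => {j | i < f j}.ncard

/-- Two partitions are close if corresponding parts differ by at most 1. -/
def CloseFun (f g : ℕ → ℕ) : Prop := ∀ i, |(f i : ℤ) - (g i : ℤ)| ≤ 1

/-- The partition `f ∩ g` of common parts is even: every nonzero common value occurs
at evenly many indices. -/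
def CommonPartsEven (f g : ℕ → ℕ) : Prop :=
  ∀ k : ℕ, k ≠ 0 → Even {i | f i = k ∧ g i = k}.ncard

/-- `f` and `g` are 2-transverse: close, with `f ∩ g` even. -/
def TwoTransverseFun (f g : ℕ → ℕ) : Prop := CloseFun f g ∧ CommonPartsEven f g

lemma tchar (f : ℕ → ℕ) (hant : Antitone f) (hfin : ∃ N, ∀ i ≥ N, f i = 0)
    (i j : ℕ) : j < transposeFun f i ↔ i < f j := by
  obtain ⟨N, hN⟩ := hfin
  have hex : ∃ j, f j ≤ i := ⟨N, by simp [hN N le_rfl]⟩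
  let m := Nat.find hex
  have hset : {j | i < f j} = Set.Iio m := by
    ext j'
    simp only [Set.mem_setOf_eq, Set.mem_Iio]
    constructor
    · intro h
      by_contra hc
      push_neg at hc
      have h1 : f j' ≤ f (Nat.find hex) := hant hc
      have h2 := Nat.find_spec hex
      omega
    · intro h
      have := Nat.find_min hex h
      omega
  have hT : transposeFun f i = m := by
    rw [transposeFun, hset, ← Finset.coe_range, Set.ncard_coe_finset, Finset.card_range]
  rw [hT]
  constructor
  · intro h
    have := Nat.find_min hex h
    omega
  · intro h
    by_contra hc
    push_neg at hc
    have h1 : f j ≤ f (Nat.find hex) := hant hc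
    have h2 := Nat.find_spec hex
    omega

lemma tzero (f : ℕ → ℕ) (hant : Antitone f) (hfin : ∃ N, ∀ i ≥ N, f i = 0)
    (i : ℕ) : transposeFun f i = 0 ↔ f 0 ≤ i := by
  have h := tchar f hant hfin i 0
  constructor
  · intro h0; by_contra hc; push_neg at hc; rw [← h] at hc; omega
  · intro h0; by_contra hc
    have : 0 < transposeFun f i := Nat.pos_of_ne_zero hc
    rw [h] at this; omega

lemma tshift (f : ℕ → ℕ) (hant : Antitone f) (hfin : ∃ N, ∀ i ≥ N, f i = 0)
    (i : ℕ) : transposeFun (fun j => f (j + 1)) i = transposeFun f i - 1 := by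
  have hant' : Antitone (fun j => f (j + 1)) := fun a b h => hant (by omega)
  have hfin' : ∃ N, ∀ j ≥ N, (fun j => f (j + 1)) j = 0 := by
    obtain ⟨N, hN⟩ := hfin; exact ⟨N, fun j hj => hN (j + 1) (by omega)⟩
  have h1 := tchar f hant hfin i
  have h2 := tchar _ hant' hfin' i
  have key : ∀ j, j < transposeFun (fun j => f (j + 1)) i ↔ j + 1 < transposeFun f i := by
    intro j
    rw [h2 j, h1 (j + 1)]
  have ha := key (transposeFun (fun j => f (j + 1)) i)
  have hb := key (transposeFun f i - 1)
  omega

lemma tsumeq (f : ℕ → ℕ) (hant : Antitone f) (M : ℕ) (hM : ∀ i ≥ M, f i = 0)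
    (hM0 : f 0 ≤ M) :
    ∑ i ∈ Finset.range M, transposeFun f i = ∑ j ∈ Finset.range M, f j := by
  have hfil : ∀ i, transposeFun f i
      = ((Finset.range M).filter (fun j => i < f j)).card := by
    intro i
    rw [transposeFun]
    have : {j | i < f j} = ↑((Finset.range M).filter (fun j => i < f j)) := by
      ext j
      simp only [Set.mem_setOf_eq, Finset.coe_filter, Finset.mem_range]
      constructor
      · intro h
        refine ⟨?_, h⟩
        by_contra hc; push_neg at hc
        have := hM j hc; omega
      · exact fun h => h.2
    rw [this, Set.ncard_coe_finset]
  calc ∑ i ∈ Finset.range M, transposeFun f i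
      = ∑ i ∈ Finset.range M, ∑ j ∈ Finset.range M, if i < f j then 1 else 0 := by
        refine Finset.sum_congr rfl fun i _ => ?_
        rw [hfil i, Finset.card_filter]
    _ = ∑ j ∈ Finset.range M, ∑ i ∈ Finset.range M, if i < f j then 1 else 0 :=
        Finset.sum_comm
    _ = ∑ j ∈ Finset.range M, f j := by
        refine Finset.sum_congr rfl fun j hj => ?_
        have hfj : f j ≤ M := le_trans (hant (Nat.zero_le j)) hM0
        rw [← Finset.card_filter]
        have : (Finset.range M).filter (fun i => i < f j) = Finset.range (f j) := by
          ext i; simp; omega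
        rw [this, Finset.card_range]

/-- Let `λ` be a partition of `n` with largest part `λ₁`, and `λ_⋆` the partition
obtained by removing the first part. Then `(λ_⋆)ᵗ` is the unique partition `μ` of
`n − λ₁` such that `λᵗ` and `μ` are 2-transverse. -/
theorem statement7 (f : ℕ → ℕ) (hant : Antitone f) (hfin : ∃ N, ∀ i ≥ N, f i = 0)
    (n : ℕ) (hsum : ∑ᶠ i, f i = n)
    (μ : ℕ → ℕ) (hμant : Antitone μ) (hμfin : ∃ N, ∀ i ≥ N, μ i = 0)
    (hμsum : ∑ᶠ i, μ i = n - f 0) :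
    TwoTransverseFun (transposeFun f) μ ↔ μ = transposeFun fun j => f (j + 1) := by
  set T := transposeFun f with hT
  set G := transposeFun (fun j => f (j + 1)) with hG
  have hshift : ∀ i, G i = T i - 1 := fun i => tshift f hant hfin i
  have hzero : ∀ i, T i = 0 ↔ f 0 ≤ i := fun i => tzero f hant hfin i
  constructor
  · rintro ⟨hclose, _⟩
    -- choose a large bound M
    obtain ⟨N, hN⟩ := hfin
    obtain ⟨K, hK⟩ := hμfin
    set M := max (max N K) (f 0 + 1) with hM
    have hMN : ∀ i ≥ M, f i = 0 := fun i hi => hN i (by omega)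
    have hMK : ∀ i ≥ M, μ i = 0 := fun i hi => hK i (by omega)
    have hMf0 : f 0 + 1 ≤ M := by omega
    -- convert finsums to finite sums
    have hsum' : ∑ i ∈ Finset.range M, f i = n := by
      rw [← hsum]
      exact (finsum_eq_sum_of_support_subset f (fun x hx => by
        simp only [Finset.coe_range, Set.mem_Iio]
        by_contra hc
        exact hx (hMN x (by omega)))).symm
    have hμsum' : ∑ i ∈ Finset.range M, μ i = n - f 0 := by
      rw [← hμsum]
      exact (finsum_eq_sum_of_support_subset μ (fun x hx => by
        simp only [Finset.coe_range, Set.mem_Iio]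
        by_contra hc
        exact hx (hMK x (by omega)))).symm
    have hf0n : f 0 ≤ n := by
      rw [← hsum']
      exact Finset.single_le_sum (fun i _ => Nat.zero_le _) (by simp; omega)
    have hTsum : ∑ i ∈ Finset.range M, T i = n := by
      rw [hT, tsumeq f hant M hMN (by omega)]; exact hsum'
    -- the key integer sum identity
    have hkey : ∑ i ∈ Finset.range M, ((T i : ℤ) - (μ i : ℤ)) = f 0 := by
      rw [Finset.sum_sub_distrib, ← Nat.cast_sum, ← Nat.cast_sum, hTsum, hμsum']
      omega
    -- split the sum at f 0
    have hsplit : ∑ i ∈ Finset.Ico 0 (f 0), ((T i : ℤ) - (μ i : ℤ))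
        + ∑ i ∈ Finset.Ico (f 0) M, ((T i : ℤ) - (μ i : ℤ)) = f 0 := by
      rw [Finset.sum_Ico_consecutive _ (Nat.zero_le _) (by omega)]
      rw [← Finset.range_eq_Ico] at *
      exact hkey
    have hAle : ∑ i ∈ Finset.Ico 0 (f 0), ((T i : ℤ) - (μ i : ℤ)) ≤ f 0 := by
      calc ∑ i ∈ Finset.Ico 0 (f 0), ((T i : ℤ) - (μ i : ℤ))
          ≤ ∑ _i ∈ Finset.Ico 0 (f 0), (1 : ℤ) := by
            refine Finset.sum_le_sum fun i _ => ?_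
            have := hclose i
            rw [abs_le] at this
            omega
        _ = f 0 := by simp
    have hBle : ∀ i ∈ Finset.Ico (f 0) M, ((T i : ℤ) - (μ i : ℤ)) ≤ 0 := by
      intro i hi
      simp only [Finset.mem_Ico] at hi
      have : T i = 0 := (hzero i).2 hi.1
      rw [this]
      push_cast
      omega
    have hBzero : ∀ i ∈ Finset.Ico (f 0) M, ((T i : ℤ) - (μ i : ℤ)) = 0 := by
      have hB0 : ∑ i ∈ Finset.Ico (f 0) M, ((T i : ℤ) - (μ i : ℤ)) = 0 := by
        have := Finset.sum_nonpos hBle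
        omega
      exact (Finset.sum_eq_zero_iff_of_nonpos hBle).1 hB0
    have hAone : ∀ i ∈ Finset.Ico 0 (f 0), ((T i : ℤ) - (μ i : ℤ)) = 1 := by
      have hB0 : ∑ i ∈ Finset.Ico (f 0) M, ((T i : ℤ) - (μ i : ℤ)) = 0 :=
        Finset.sum_eq_zero hBzero
      have hA : ∑ i ∈ Finset.Ico 0 (f 0), ((T i : ℤ) - (μ i : ℤ)) = f 0 := by omega
      by_contra hc
      push_neg at hc
      obtain ⟨i₀, hi₀, hne⟩ := hc
      have hlt : ∑ i ∈ Finset.Ico 0 (f 0), ((T i : ℤ) - (μ i : ℤ))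
          < ∑ _i ∈ Finset.Ico 0 (f 0), (1 : ℤ) := by
        refine Finset.sum_lt_sum (fun i _ => ?_) ⟨i₀, hi₀, ?_⟩
        · have := hclose i; rw [abs_le] at this; omega
        · have := hclose i₀; rw [abs_le] at this; omega
      have hone : ∑ _i ∈ Finset.Ico 0 (f 0), (1 : ℤ) = f 0 := by simp
      omega
    funext i
    rcases lt_or_ge i (f 0) with hi | hi
    · have h1 := hAone i (by simp [hi])
      have h2 : T i ≠ 0 := fun h => by have := (hzero i).1 h; omega
      have h3 := hshift i
      omega
    · have h3 := hshift i
      have h2 : T i = 0 := (hzero i).2 hi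
      rcases lt_or_ge i M with hiM | hiM
      · have := hBzero i (by simp [hi, hiM])
        omega
      · have := hMK i hiM
        omega
  · rintro rfl
    constructor
    · intro i
      rw [abs_le]
      have := hshift i
      constructor <;> omega
    · intro k hk
      have : {i | T i = k ∧ G i = k} = ∅ := by
        ext i
        simp only [Set.mem_setOf_eq, Set.mem_empty_iff_false, iff_false, not_and]
        intro h1
        have h2 : T i ≠ 0 := by omega
        have := hshift i
        omega
      rw [this]
      simp
end
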